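/- arXiv:2208.02756 — 5 statements merged into one kernel-verified Lean document; each statement's English description precedes it below -/
import Mathlib

section
/- Define σ(l,s) = Σ_{l_1,...,l_s ≥ 0, l_1+...+l_s = l} C_{l_1}···C_{l_s}. Then for integers l > s ≥ 1, σ(l,s) ≥ (C_l/4)·((5/4)^s − 1). -/
open Finset

/-- `σ(l,s) = Σ_{l₁+⋯+l_s = l, lᵢ ≥ 0} C_{l₁}⋯C_{l_s}`. -/
def sigmaCat (l s : ℕ) : ℕ :=
  ∑ x ∈ Finset.Nat.antidiagonalTuple s l, ∏ i, catalan (x i)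

lemma catalan_succ_le (n : ℕ) : catalan (n + 1) ≤ 4 * catalan n := by
  have h1 : (n + 2) * catalan (n + 1) = (4 * n + 2) * catalan n := by
    have h := Nat.succ_mul_centralBinom_succ n
    have h2 := succ_mul_catalan_eq_centralBinom n
    have h3 := succ_mul_catalan_eq_centralBinom (n + 1)
    have key : (n + 1) * ((n + 2) * catalan (n + 1)) = (n + 1) * ((4 * n + 2) * catalan n) :=
      calc (n+1) * ((n+2) * catalan (n+1)) = (n+1) * (n+1).centralBinom := by
            rw [show n+2 = n+1+1 from rfl, h3]
        _ = 2 * (2*n+1) * n.centralBinom := h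
        _ = 2 * (2*n+1) * ((n+1) * catalan n) := by rw [h2]
        _ = (n+1) * ((4*n+2) * catalan n) := by ring
    exact Nat.eq_of_mul_eq_mul_left (by omega) key
  nlinarith [h1, Nat.zero_le (catalan n)]

lemma sigma_one (l : ℕ) : sigmaCat l 1 = catalan l := by
  simp [sigmaCat, Finset.Nat.antidiagonalTuple_one]

lemma sigma_rec (l s : ℕ) (hl : 1 ≤ l) :
    sigmaCat l s + sigmaCat (l - 1) s ≤ sigmaCat l (s + 1) := by
  classical
  set A := (Finset.Nat.antidiagonalTuple s l).image (fun x => Fin.snoc x 0 : (Fin s → ℕ) → Fin (s+1) → ℕ)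
  set B := (Finset.Nat.antidiagonalTuple s (l-1)).image (fun x => Fin.snoc x 1 : (Fin s → ℕ) → Fin (s+1) → ℕ)
  have hsnoc_inj : ∀ c : ℕ, Function.Injective (fun x => Fin.snoc x c : (Fin s → ℕ) → Fin (s+1) → ℕ) := by
    intro c x y h
    funext i
    have := congrFun h (Fin.castSucc i)
    simpa using this
  have hsubA : A ⊆ Finset.Nat.antidiagonalTuple (s+1) l := by
    intro y hy
    simp only [A, Finset.mem_image] at hy
    obtain ⟨x, hx, rfl⟩ := hy
    rw [Finset.Nat.mem_antidiagonalTuple] at hx ⊢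
    rw [Fin.sum_univ_castSucc]
    simpa using hx
  have hsubB : B ⊆ Finset.Nat.antidiagonalTuple (s+1) l := by
    intro y hy
    simp only [B, Finset.mem_image] at hy
    obtain ⟨x, hx, rfl⟩ := hy
    rw [Finset.Nat.mem_antidiagonalTuple] at hx ⊢
    rw [Fin.sum_univ_castSucc]
    simp only [Fin.snoc_castSucc, Fin.snoc_last]
    omega
  have hdisj : Disjoint A B := by
    rw [Finset.disjoint_left]
    intro y hyA hyB
    simp only [A, B, Finset.mem_image] at hyA hyB
    obtain ⟨x, _, rfl⟩ := hyA
    obtain ⟨z, _, h⟩ := hyB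
    have := congrFun h (Fin.last s)
    simp at this
  have hA : ∑ y ∈ A, ∏ i, catalan (y i) = sigmaCat l s := by
    rw [Finset.sum_image (fun x _ y _ h => hsnoc_inj 0 h)]
    apply Finset.sum_congr rfl
    intro x _
    rw [Fin.prod_univ_castSucc]
    simp
  have hB : ∑ y ∈ B, ∏ i, catalan (y i) = sigmaCat (l-1) s := by
    rw [Finset.sum_image (fun x _ y _ h => hsnoc_inj 1 h)]
    apply Finset.sum_congr rfl
    intro x _
    rw [Fin.prod_univ_castSucc]
    simp
  calc sigmaCat l s + sigmaCat (l-1) s = ∑ y ∈ A ∪ B, ∏ i, catalan (y i) := by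
        rw [Finset.sum_union hdisj, hA, hB]
    _ ≤ sigmaCat l (s+1) :=
        Finset.sum_le_sum_of_subset (Finset.union_subset hsubA hsubB)

lemma key : ∀ s l : ℕ, s + 2 ≤ l → (catalan l : ℝ) * (5/4 : ℝ) ^ s ≤ (sigmaCat l (s+1) : ℝ) := by
  intro s
  induction s with
  | zero => intro l hl; simp [sigma_one]
  | succ s ih =>
    intro l hl
    have h1 := ih l (by omega)
    have h2 := ih (l - 1) (by omega)
    have hrec := sigma_rec l (s+1) (by omega)
    have hrec' : (sigmaCat l (s+1) : ℝ) + (sigmaCat (l-1) (s+1) : ℝ) ≤ (sigmaCat l (s+2) : ℝ) := by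
      exact_mod_cast hrec
    have hcat : (catalan l : ℝ) ≤ 4 * (catalan (l-1) : ℝ) := by
      have := catalan_succ_le (l - 1)
      have hl1 : l - 1 + 1 = l := by omega
      rw [hl1] at this
      exact_mod_cast this
    have hpow : (0:ℝ) < (5/4:ℝ)^s := by positivity
    have h3 : (catalan l : ℝ) * (5/4:ℝ)^s ≤ 4 * ((catalan (l-1) : ℝ) * (5/4:ℝ)^s) := by
      nlinarith [hpow, hcat]
    have hps : (5/4:ℝ)^(s+1) = (5/4:ℝ)^s * (5/4) := pow_succ _ _
    nlinarith [h1, h2, h3, hrec', hps]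

/-- Lower bound: for `l > s ≥ 1`, `σ(l,s) ≥ (C_l/4)·((5/4)^s − 1)`. -/
theorem stmt2 (l s : ℕ) (hs : 1 ≤ s) (hls : s < l) :
    (catalan l : ℝ) / 4 * ((5 / 4 : ℝ) ^ s - 1) ≤ (sigmaCat l s : ℝ) := by
  obtain ⟨t, rfl⟩ := Nat.exists_eq_add_of_le hs
  have h := key t l (by omega)
  have hpow : (0:ℝ) < (5/4:ℝ)^t := by positivity
  have hc : (0:ℝ) ≤ (catalan l : ℝ) := by positivity
  rw [show 1 + t = t + 1 by ring] at *
  nlinarith [h, hpow, hc, pow_succ (5/4:ℝ) t]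
end

section
/- Let S, Q be symmetric n×n real matrices and suppose Q has at most 2m nonzero eigenvalues (i.e., λ_{2m+1}(Q) = 0 in the ordered spectrum), where m is an integer with 1 ≤ m ≤ n/6 − 1. Then for every positive integer p: ‖S+Q‖^{2p} − 7m·‖S‖^{2p} ≤ tr((S+Q)^{2p}) − tr(S^{2p}) ≤ 4m·‖S+Q‖^{2p}, where ‖·‖ denotes the operator (spectral) norm. -/
/-!
Weyl-type counting: a nonzero vector lying in the span of the eigenvectors of `S + Q` with
eigenvalues `≥ t`, of those of `S` with eigenvalues `< t` and of those of `Q` with eigenvalues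
`≤ 0` would have Rayleigh quotients `r₁ = r₂ + r₃` with `r₁ ≥ t > r₂` and `r₃ ≤ 0`. A dimension
count therefore gives `#{λ(S+Q) ≥ t} ≤ #{λ(S) ≥ t} + #{λ(Q) > 0}`, and likewise for the other
comparisons between the spectra of `S` and `S + Q`.

Such counting inequalities allow the eigenvalues to be matched: for monotone `f ≥ 0` bounded
by `B`, `∑ f(λ(S+Q)) ≤ ∑ f(λ(S)) + #{λ(Q) > 0} B`. Splitting `x^{2p} = (x⁺)^{2p} + (x⁻)^{2p}`
and matching each part gives `tr (S+Q)^{2p} - tr S^{2p} ≤ rank Q ‖S+Q‖^{2p}`. Matching the other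
way round, with the largest and the smallest eigenvalue of `S + Q` (one of which carries
`‖S+Q‖`) left out, gives `tr S^{2p} - tr (S+Q)^{2p} + ‖S+Q‖^{2p} ≤ (rank Q + 2) ‖S‖^{2p}`.
-/

open Matrix Finset

namespace Finset

theorem card_filter_erase_add_one {ι : Type*} [DecidableEq ι] {p : ι → Prop} [DecidablePred p]
    {s : Finset ι} {i : ι} (hi : i ∈ s) (hp : p i) :
    #{j ∈ s.erase i | p j} + 1 = #{j ∈ s | p j} := by
  rw [filter_erase, card_erase_add_one (mem_filter.mpr ⟨hi, hp⟩)]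

theorem card_filter_le_card_filter_erase_add_one {ι : Type*} [DecidableEq ι] (p : ι → Prop)
    [DecidablePred p] (s : Finset ι) (i : ι) :
    #{j ∈ s | p j} ≤ #{j ∈ s.erase i | p j} + 1 := by
  rw [filter_erase]
  have := pred_card_le_card_erase (s := {j ∈ s | p j}) (a := i)
  omega

/-- The induction removes the largest `a i₀`; it is matched with the largest `s j₀` when
`a i₀ ≤ s j₀`, and otherwise the count at `t = a i₀` shows that one of the `k` spare slots,
each worth `B`, is available for it. -/
theorem sum_le_sum_add_mul_of_card_le {α ι κ : Type*} [LinearOrder α] [DecidableEq ι]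
    [DecidableEq κ] {f : α → ℝ} (hf : Monotone f) (a : ι → α) (s : κ → α) {B : ℝ} (hB : 0 ≤ B)
    (I : Finset ι) (J : Finset κ) (k : ℕ) (haB : ∀ i ∈ I, f (a i) ≤ B)
    (hs : ∀ j ∈ J, 0 ≤ f (s j))
    (hcard : ∀ t, #{i ∈ I | t ≤ a i} ≤ #{j ∈ J | t ≤ s j} + k) :
    ∑ i ∈ I, f (a i) ≤ ∑ j ∈ J, f (s j) + k * B := by
  induction I using Finset.strongInduction generalizing J k with
  | H I ih =>
  rcases I.eq_empty_or_nonempty with rfl | hI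
  · simpa using add_nonneg (sum_nonneg hs) (by positivity)
  obtain ⟨i₀, hi₀, hmax⟩ := I.exists_max_image a hI
  have hcard_gt (t) (ht : a i₀ < t) : #{i ∈ I.erase i₀ | t ≤ a i} = 0 := by
    rw [card_eq_zero, filter_eq_empty_iff]
    exact fun i hi => not_le.mpr ((hmax i (mem_of_mem_erase hi)).trans_lt ht)
  have haB' (i) (hi : i ∈ I.erase i₀) := haB i (mem_of_mem_erase hi)
  have hsplit := add_sum_erase I (f ∘ a) hi₀
  simp only [Function.comp_apply] at hsplit
  by_cases hJ : ∃ j ∈ J, a i₀ ≤ s j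
  · obtain ⟨j, hj, hij⟩ := hJ
    obtain ⟨j₀, hj₀, hjmax⟩ := J.exists_max_image s ⟨j, hj⟩
    have hij₀ : a i₀ ≤ s j₀ := hij.trans (hjmax j hj)
    have := ih (I.erase i₀) (erase_ssubset hi₀) (J.erase j₀) k haB'
      (fun j hj => hs j (mem_of_mem_erase hj)) fun t => by
        rcases le_or_gt t (a i₀) with ht | ht
        · have := card_filter_erase_add_one (p := (t ≤ a ·)) hi₀ ht
          have := card_filter_erase_add_one (p := (t ≤ s ·)) hj₀ (ht.trans hij₀)
          have := hcard t
          omega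
        · simp [hcard_gt t ht]
    have hsplitJ := add_sum_erase J (f ∘ s) hj₀
    simp only [Function.comp_apply] at hsplitJ
    linarith [hf hij₀]
  · push Not at hJ
    obtain ⟨k, rfl⟩ : ∃ k', k = k' + 1 := by
      have := card_filter_erase_add_one (p := (a i₀ ≤ a ·)) hi₀ le_rfl
      have h0 : #{j ∈ J | a i₀ ≤ s j} = 0 := by
        rw [card_eq_zero, filter_eq_empty_iff]
        exact fun j hj => not_le.mpr (hJ j hj)
      have := hcard (a i₀)
      exact Nat.exists_eq_add_one.mpr (by omega)
    have := ih (I.erase i₀) (erase_ssubset hi₀) J k haB' hs fun t => by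
      rcases le_or_gt t (a i₀) with ht | ht
      · have := card_filter_erase_add_one (p := (t ≤ a ·)) hi₀ ht
        have := hcard t
        omega
      · simp [hcard_gt t ht]
    push_cast
    linarith [haB i₀ hi₀]

theorem card_filter_pos_add_card_filter_neg {ι : Type*} [Fintype ι] (f : ι → ℝ) :
    #{i | 0 < f i} + #{i | f i < 0} = #{i | f i ≠ 0} := by
  classical
  rw [← card_union_of_disjoint (disjoint_filter.mpr fun i _ h h' => (h.trans h').false),
    ← filter_or]
  simp only [ne_iff_lt_or_gt, or_comm]

end Finset

theorem pow_eq_posPart_pow_add_negPart_pow {k : ℕ} (hk : Even k) (hk0 : k ≠ 0) (x : ℝ) :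
    x ^ k = x⁺ ^ k + x⁻ ^ k := by
  rcases le_total 0 x with hx | hx
  · simp [posPart_eq_self.mpr hx, negPart_eq_zero.mpr hx, zero_pow hk0]
  · simp [posPart_eq_zero.mpr hx, negPart_eq_neg.mpr hx, zero_pow hk0, hk.neg_pow]

theorem sum_pow_eq_sum_posPart_pow_add_sum_negPart_pow {ι : Type*} {k : ℕ} (hk : Even k)
    (hk0 : k ≠ 0) (s : Finset ι) (f : ι → ℝ) :
    ∑ i ∈ s, f i ^ k = ∑ i ∈ s, (f i)⁺ ^ k + ∑ i ∈ s, (f i)⁻ ^ k := by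
  rw [← sum_add_distrib]
  exact sum_congr rfl fun i _ => pow_eq_posPart_pow_add_negPart_pow hk hk0 (f i)

theorem monotone_posPart_pow (k : ℕ) : Monotone fun x : ℝ => x⁺ ^ k :=
  fun _ _ h => pow_le_pow_left₀ (posPart_nonneg _) (posPart_mono h) k

theorem antitone_negPart_pow (k : ℕ) : Antitone fun x : ℝ => x⁻ ^ k :=
  fun _ _ h => pow_le_pow_left₀ (negPart_nonneg _) (negPart_anti h) k

theorem posPart_pow_le_of_abs_le {x B : ℝ} (h : |x| ≤ B) (k : ℕ) : x⁺ ^ k ≤ B ^ k :=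
  pow_le_pow_left₀ (posPart_nonneg x) (sup_le ((le_abs_self x).trans h) ((abs_nonneg x).trans h)) k

theorem negPart_pow_le_of_abs_le {x B : ℝ} (h : |x| ≤ B) (k : ℕ) : x⁻ ^ k ≤ B ^ k :=
  pow_le_pow_left₀ (negPart_nonneg x) (sup_le ((neg_le_abs x).trans h) ((abs_nonneg x).trans h)) k

theorem abs_le_ciSup_abs {ι : Type*} [Finite ι] (f : ι → ℝ) (i : ι) : |f i| ≤ ⨆ j, |f j| :=
  le_ciSup (f := fun j => |f j|) (Finite.bddAbove_range _) i

theorem Submodule.finrank_add_finrank_add_finrank_le {K E : Type*} [DivisionRing K]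
    [AddCommGroup E] [Module K E] [FiniteDimensional K E] (V W U : Submodule K E) :
    Module.finrank K V + Module.finrank K W + Module.finrank K U
      ≤ 2 * Module.finrank K E + Module.finrank K ↥(V ⊓ W ⊓ U) := by
  have := finrank_sup_add_finrank_inf_eq V W
  have := finrank_sup_add_finrank_inf_eq (V ⊓ W) U
  have := (V ⊔ W).finrank_le
  have := (V ⊓ W ⊔ U).finrank_le
  omega

namespace Matrix.IsHermitian

variable {ι : Type*} [Fintype ι] [DecidableEq ι] {A : Matrix ι ι ℝ} (hA : A.IsHermitian)

theorem trace_pow_eq_sum_eigenvalues_pow (k : ℕ) :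
    (A ^ k).trace = ∑ i, hA.eigenvalues i ^ k := by
  conv_lhs => rw [hA.spectral_theorem, ← map_pow, Unitary.conjStarAlgAut_apply, trace_mul_cycle,
    Unitary.coe_star_mul_self, one_mul, diagonal_pow, trace_diagonal]
  simp

theorem toEuclideanLin_eigenvectorBasis (i : ι) :
    toEuclideanLin A (hA.eigenvectorBasis i) = hA.eigenvalues i • hA.eigenvectorBasis i := by
  ext j
  simpa using congrFun (hA.mulVec_eigenvectorBasis i) j

theorem repr_toEuclideanLin (x : EuclideanSpace ℝ ι) (i : ι) :
    hA.eigenvectorBasis.repr (toEuclideanLin A x) i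
      = hA.eigenvalues i * hA.eigenvectorBasis.repr x i := by
  rw [OrthonormalBasis.repr_apply_apply, OrthonormalBasis.repr_apply_apply,
    ← isSymmetric_toEuclideanLin_iff.mpr hA, toEuclideanLin_eigenvectorBasis,
    real_inner_smul_left]

theorem inner_toEuclideanLin_eq_sum (x : EuclideanSpace ℝ ι) :
    inner ℝ x (toEuclideanLin A x)
      = ∑ i, hA.eigenvalues i * hA.eigenvectorBasis.repr x i ^ 2 := by
  rw [← hA.eigenvectorBasis.repr.inner_map_map, PiLp.inner_apply]
  simp only [repr_toEuclideanLin, RCLike.inner_apply, conj_trivial]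
  exact sum_congr rfl fun i _ => by ring

theorem norm_sq_eq_sum (x : EuclideanSpace ℝ ι) :
    ‖x‖ ^ 2 = ∑ i, hA.eigenvectorBasis.repr x i ^ 2 := by
  rw [← hA.eigenvectorBasis.repr.norm_map, EuclideanSpace.norm_sq_eq]
  simp

noncomputable def spectralSubspace (s : Set ℝ) : Submodule ℝ (EuclideanSpace ℝ ι) :=
  Submodule.span ℝ (hA.eigenvectorBasis '' {i | hA.eigenvalues i ∈ s})

theorem finrank_spectralSubspace (s : Set ℝ) [DecidablePred (· ∈ s)] :
    Module.finrank ℝ (hA.spectralSubspace s) = #{i | hA.eigenvalues i ∈ s} := by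
  have := finrank_span_eq_card (hA.eigenvectorBasis.orthonormal.linearIndependent.comp
    (Subtype.val : {i // hA.eigenvalues i ∈ s} → ι) Subtype.val_injective)
  rw [Set.range_comp, Subtype.range_coe_subtype] at this
  rw [spectralSubspace, this, Fintype.card_subtype]

theorem repr_eq_zero_of_mem_spectralSubspace {s : Set ℝ} {x : EuclideanSpace ℝ ι}
    (hx : x ∈ hA.spectralSubspace s) {i : ι} (hi : hA.eigenvalues i ∉ s) :
    hA.eigenvectorBasis.repr x i = 0 := by
  induction hx using Submodule.span_induction with
  | mem y hy =>
    obtain ⟨j, hj, rfl⟩ := hy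
    have hji : j ≠ i := by rintro rfl; exact hi hj
    simp [hji.symm]
  | zero => simp
  | add y z _ _ hy hz => simp [hy, hz]
  | smul c y _ hy => simp [hy]

/-- The Rayleigh quotient of `x` is the barycentre of the eigenvalues weighted by the squared
coordinates of `x` in the eigenbasis. -/
theorem exists_mem_inner_eq_mul_norm_sq {s : Set ℝ} (hs : Convex ℝ s) {x : EuclideanSpace ℝ ι}
    (hx : x ∈ hA.spectralSubspace s) (hx0 : x ≠ 0) :
    ∃ r ∈ s, inner ℝ x (toEuclideanLin A x) = r * ‖x‖ ^ 2 := by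
  classical
  set c := hA.eigenvectorBasis.repr x
  have hsupp (i : ι) (hi : c i ≠ 0) : hA.eigenvalues i ∈ s := by
    by_contra h
    exact hi (hA.repr_eq_zero_of_mem_spectralSubspace hx h)
  have hnorm : ‖x‖ ^ 2 = ∑ i ∈ {i | hA.eigenvalues i ∈ s}, c i ^ 2 := by
    rw [hA.norm_sq_eq_sum, sum_filter_of_ne fun i _ h => hsupp i (by simpa using h)]
  have hinner : inner ℝ x (toEuclideanLin A x)
      = ∑ i ∈ {i | hA.eigenvalues i ∈ s}, c i ^ 2 • hA.eigenvalues i := by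
    rw [hA.inner_toEuclideanLin_eq_sum,
      sum_filter_of_ne fun i _ h => hsupp i (by simpa using left_ne_zero_of_mul h)]
    exact sum_congr rfl fun i _ => by rw [smul_eq_mul, mul_comm]
  have hpos : 0 < ‖x‖ ^ 2 := by positivity
  refine ⟨_, hs.centerMass_mem (fun i _ => sq_nonneg (c i)) (hnorm ▸ hpos)
    fun i hi => (mem_filter.mp hi).2, ?_⟩
  rw [centerMass, ← hnorm, hinner, smul_eq_mul]
  field_simp

theorem card_eigenvalues_mem_add_card_add_card_le {X Y Z : Matrix ι ι ℝ} (hX : X.IsHermitian)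
    (hY : Y.IsHermitian) (hZ : Z.IsHermitian) (hXYZ : X = Y + Z) {s₁ s₂ s₃ : Set ℝ}
    [DecidablePred (· ∈ s₁)] [DecidablePred (· ∈ s₂)] [DecidablePred (· ∈ s₃)]
    (h₁ : Convex ℝ s₁) (h₂ : Convex ℝ s₂) (h₃ : Convex ℝ s₃)
    (hs : ∀ a ∈ s₁, ∀ b ∈ s₂, ∀ c ∈ s₃, a ≠ b + c) :
    #{i | hX.eigenvalues i ∈ s₁} + #{i | hY.eigenvalues i ∈ s₂} + #{i | hZ.eigenvalues i ∈ s₃}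
      ≤ 2 * Fintype.card ι := by
  have hbot : hX.spectralSubspace s₁ ⊓ hY.spectralSubspace s₂ ⊓ hZ.spectralSubspace s₃ = ⊥ := by
    rw [Submodule.eq_bot_iff]
    rintro x ⟨⟨hx₁, hx₂⟩, hx₃⟩
    by_contra hx0
    obtain ⟨a, ha, hxa⟩ := hX.exists_mem_inner_eq_mul_norm_sq h₁ hx₁ hx0
    obtain ⟨b, hb, hxb⟩ := hY.exists_mem_inner_eq_mul_norm_sq h₂ hx₂ hx0
    obtain ⟨c, hc, hxc⟩ := hZ.exists_mem_inner_eq_mul_norm_sq h₃ hx₃ hx0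
    have hsplit : inner ℝ x (toEuclideanLin X x)
        = inner ℝ x (toEuclideanLin Y x) + inner ℝ x (toEuclideanLin Z x) := by
      rw [hXYZ, map_add, LinearMap.add_apply, inner_add_right]
    refine hs a ha b hb c hc (mul_right_cancel₀ (pow_ne_zero 2 (norm_ne_zero_iff.mpr hx0)) ?_)
    rw [← hxa, hsplit, hxb, hxc, add_mul]
  have := Submodule.finrank_add_finrank_add_finrank_le (hX.spectralSubspace s₁)
    (hY.spectralSubspace s₂) (hZ.spectralSubspace s₃)
  rwa [hbot, finrank_bot, add_zero, finrank_euclideanSpace, finrank_spectralSubspace,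
    finrank_spectralSubspace, finrank_spectralSubspace] at this

section Perturbation

variable {S Q : Matrix ι ι ℝ} (hS : S.IsHermitian) (hQ : Q.IsHermitian)

theorem card_eigenvalues_add_ge_le (t : ℝ) : #{i | t ≤ (hS.add hQ).eigenvalues i}
    ≤ #{i | t ≤ hS.eigenvalues i} + #{i | 0 < hQ.eigenvalues i} := by
  have := card_eigenvalues_mem_add_card_add_card_le (hS.add hQ) hS hQ rfl
    (convex_Ici t) (convex_Iio t) (convex_Iic 0) fun a ha b hb c hc => by
      simp_all only [Set.mem_Ici, Set.mem_Iio, Set.mem_Iic]; linarith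
  have := card_filter_add_card_filter_not (s := univ) (fun i => t ≤ hS.eigenvalues i)
  have := card_filter_add_card_filter_not (s := univ) (fun i => 0 < hQ.eigenvalues i)
  simp only [Set.mem_Ici, Set.mem_Iio, Set.mem_Iic, not_le, not_lt, card_univ] at *
  omega

theorem card_eigenvalues_add_le_le (t : ℝ) : #{i | (hS.add hQ).eigenvalues i ≤ t}
    ≤ #{i | hS.eigenvalues i ≤ t} + #{i | hQ.eigenvalues i < 0} := by
  have := card_eigenvalues_mem_add_card_add_card_le (hS.add hQ) hS hQ rfl
    (convex_Iic t) (convex_Ioi t) (convex_Ici 0) fun a ha b hb c hc => by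
      simp_all only [Set.mem_Ici, Set.mem_Ioi, Set.mem_Iic]; linarith
  have := card_filter_add_card_filter_not (s := univ) (fun i => hS.eigenvalues i ≤ t)
  have := card_filter_add_card_filter_not (s := univ) (fun i => hQ.eigenvalues i < 0)
  simp only [Set.mem_Ici, Set.mem_Ioi, Set.mem_Iic, not_le, not_lt, card_univ] at *
  omega

theorem card_eigenvalues_ge_le_add (t : ℝ) : #{i | t ≤ hS.eigenvalues i}
    ≤ #{i | t ≤ (hS.add hQ).eigenvalues i} + #{i | hQ.eigenvalues i < 0} := by
  have := card_eigenvalues_mem_add_card_add_card_le (hS.add hQ) hS hQ rfl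
    (convex_Iio t) (convex_Ici t) (convex_Ici 0) fun a ha b hb c hc => by
      simp_all only [Set.mem_Ici, Set.mem_Iio]; linarith
  have := card_filter_add_card_filter_not (s := univ) (fun i => t ≤ (hS.add hQ).eigenvalues i)
  have := card_filter_add_card_filter_not (s := univ) (fun i => hQ.eigenvalues i < 0)
  simp only [Set.mem_Ici, Set.mem_Iio, not_le, not_lt, card_univ] at *
  omega

theorem card_eigenvalues_le_le_add (t : ℝ) : #{i | hS.eigenvalues i ≤ t}
    ≤ #{i | (hS.add hQ).eigenvalues i ≤ t} + #{i | 0 < hQ.eigenvalues i} := by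
  have := card_eigenvalues_mem_add_card_add_card_le (hS.add hQ) hS hQ rfl
    (convex_Ioi t) (convex_Iic t) (convex_Iic 0) fun a ha b hb c hc => by
      simp_all only [Set.mem_Ioi, Set.mem_Iic]; linarith
  have := card_filter_add_card_filter_not (s := univ) (fun i => (hS.add hQ).eigenvalues i ≤ t)
  have := card_filter_add_card_filter_not (s := univ) (fun i => 0 < hQ.eigenvalues i)
  simp only [Set.mem_Ioi, Set.mem_Iic, not_le, not_lt, card_univ] at *
  omega

variable {k : ℕ}

theorem trace_pow_add_sub_trace_pow_le (hk : Even k) (hk0 : k ≠ 0) :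
    ((S + Q) ^ k).trace - (S ^ k).trace
      ≤ #{i | hQ.eigenvalues i ≠ 0} * (⨆ i, |(hS.add hQ).eigenvalues i|) ^ k := by
  rw [trace_pow_eq_sum_eigenvalues_pow (hS.add hQ), trace_pow_eq_sum_eigenvalues_pow hS,
    sum_pow_eq_sum_posPart_pow_add_sum_negPart_pow hk hk0 _ (hS.add hQ).eigenvalues,
    sum_pow_eq_sum_posPart_pow_add_sum_negPart_pow hk hk0 _ hS.eigenvalues,
    ← card_filter_pos_add_card_filter_neg hQ.eigenvalues]
  set a := (hS.add hQ).eigenvalues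
  set s := hS.eigenvalues
  have hB : 0 ≤ (⨆ i, |a i|) ^ k := pow_nonneg (Real.iSup_nonneg fun i => abs_nonneg (a i)) k
  have hpos := sum_le_sum_add_mul_of_card_le (monotone_posPart_pow k) a s hB univ univ _
    (fun i _ => posPart_pow_le_of_abs_le (abs_le_ciSup_abs a i) k)
    (fun _ _ => pow_nonneg (posPart_nonneg _) k) fun t => by
      simpa using card_eigenvalues_add_ge_le hS hQ t
  have hneg := sum_le_sum_add_mul_of_card_le (antitone_negPart_pow k).dual_left
    (OrderDual.toDual ∘ a) (OrderDual.toDual ∘ s) hB univ univ _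
    (fun i _ => negPart_pow_le_of_abs_le (abs_le_ciSup_abs a i) k)
    (fun _ _ => pow_nonneg (negPart_nonneg _) k) fun t => card_eigenvalues_add_le_le hS hQ t.ofDual
  simp only [Function.comp_apply, OrderDual.ofDual_toDual] at hneg
  push_cast
  linarith

theorem trace_pow_sub_trace_pow_add_le (hk : Even k) (hk0 : k ≠ 0) :
    (S ^ k).trace - ((S + Q) ^ k).trace + (⨆ i, |(hS.add hQ).eigenvalues i|) ^ k
      ≤ (#{i | hQ.eigenvalues i ≠ 0} + 2) * (⨆ i, |hS.eigenvalues i|) ^ k := by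
  rcases isEmpty_or_nonempty ι with hι | hι
  · simp [zero_pow hk0]
  obtain ⟨i₁, hi₁⟩ := Finite.exists_max (hS.add hQ).eigenvalues
  obtain ⟨i₀, hi₀⟩ := Finite.exists_min (hS.add hQ).eigenvalues
  have hcard_ge (t : ℝ) : #{i | t ≤ hS.eigenvalues i} ≤ #{i ∈ univ.erase i₁ |
      t ≤ (hS.add hQ).eigenvalues i} + (#{i | hQ.eigenvalues i < 0} + 1) := by
    have := card_eigenvalues_ge_le_add hS hQ t
    have := card_filter_le_card_filter_erase_add_one (t ≤ (hS.add hQ).eigenvalues ·) univ i₁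
    omega
  have hcard_le (t : ℝ) : #{i | hS.eigenvalues i ≤ t} ≤ #{i ∈ univ.erase i₀ |
      (hS.add hQ).eigenvalues i ≤ t} + (#{i | 0 < hQ.eigenvalues i} + 1) := by
    have := card_eigenvalues_le_le_add hS hQ t
    have := card_filter_le_card_filter_erase_add_one ((hS.add hQ).eigenvalues · ≤ t) univ i₀
    omega
  rw [trace_pow_eq_sum_eigenvalues_pow (hS.add hQ), trace_pow_eq_sum_eigenvalues_pow hS,
    sum_pow_eq_sum_posPart_pow_add_sum_negPart_pow hk hk0 _ (hS.add hQ).eigenvalues,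
    sum_pow_eq_sum_posPart_pow_add_sum_negPart_pow hk hk0 _ hS.eigenvalues,
    ← card_filter_pos_add_card_filter_neg hQ.eigenvalues]
  set a := (hS.add hQ).eigenvalues
  set s := hS.eigenvalues
  have hB : 0 ≤ (⨆ i, |s i|) ^ k := pow_nonneg (Real.iSup_nonneg fun i => abs_nonneg (s i)) k
  have hpos := sum_le_sum_add_mul_of_card_le (monotone_posPart_pow k) s a hB univ
    (univ.erase i₁) _ (fun i _ => posPart_pow_le_of_abs_le (abs_le_ciSup_abs s i) k)
    (fun _ _ => pow_nonneg (posPart_nonneg _) k) hcard_ge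
  have hneg := sum_le_sum_add_mul_of_card_le (antitone_negPart_pow k).dual_left
    (OrderDual.toDual ∘ s) (OrderDual.toDual ∘ a) hB univ (univ.erase i₀) _
    (fun i _ => negPart_pow_le_of_abs_le (abs_le_ciSup_abs s i) k)
    (fun _ _ => pow_nonneg (negPart_nonneg _) k) fun t => hcard_le t.ofDual
  have hnorm : (⨆ i, |a i|) ^ k ≤ (a i₁)⁺ ^ k + (a i₀)⁻ ^ k := by
    obtain ⟨j, hj⟩ := exists_eq_ciSup_of_finite (f := fun i => |a i|)
    rw [← hj, hk.pow_abs, pow_eq_posPart_pow_add_negPart_pow hk hk0]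
    exact add_le_add (monotone_posPart_pow k (hi₁ j)) (antitone_negPart_pow k (hi₀ j))
  simp only [Function.comp_apply, OrderDual.ofDual_toDual] at hneg
  rw [sum_erase_eq_sub (mem_univ _)] at hpos hneg
  push_cast at hpos hneg ⊢
  linarith

end Perturbation

end Matrix.IsHermitian

theorem stmt4_general {n : ℕ} (m p : ℕ) (S Q : Matrix (Fin n) (Fin n) ℝ)
    (hS : S.IsHermitian) (hQ : Q.IsHermitian)
    (hm1 : 1 ≤ m)
    (hrank : (Finset.univ.filter (fun i => hQ.eigenvalues i ≠ 0)).card ≤ 2 * m)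
    (hp : 1 ≤ p) :
    (⨆ i, |(hS.add hQ).eigenvalues i|) ^ (2 * p)
        - 7 * (m : ℝ) * (⨆ i, |hS.eigenvalues i|) ^ (2 * p)
      ≤ Matrix.trace ((S + Q) ^ (2 * p)) - Matrix.trace (S ^ (2 * p)) ∧
    Matrix.trace ((S + Q) ^ (2 * p)) - Matrix.trace (S ^ (2 * p))
      ≤ 4 * (m : ℝ) * (⨆ i, |(hS.add hQ).eigenvalues i|) ^ (2 * p) := by
  have hk : Even (2 * p) := even_two_mul p
  have hk0 : 2 * p ≠ 0 := by omega
  have hupper := hS.trace_pow_add_sub_trace_pow_le hQ hk hk0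
  have hlower := hS.trace_pow_sub_trace_pow_add_le hQ hk hk0
  have hrank' : (#{i | hQ.eigenvalues i ≠ 0} : ℝ) ≤ 2 * m := by exact_mod_cast hrank
  have hm : (1 : ℝ) ≤ m := by exact_mod_cast hm1
  have hα := hk.pow_nonneg (⨆ i, |(hS.add hQ).eigenvalues i|)
  have hβ := hk.pow_nonneg (⨆ i, |hS.eigenvalues i|)
  have h₁ := mul_le_mul_of_nonneg_right (show (#{i | hQ.eigenvalues i ≠ 0} : ℝ) + 2 ≤ 7 * m by
    linarith) hβ
  have h₂ := mul_le_mul_of_nonneg_right (show (#{i | hQ.eigenvalues i ≠ 0} : ℝ) ≤ 4 * m by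
    linarith) hα
  exact ⟨by linarith, by linarith⟩

/-- Trace difference bounds for a low-rank symmetric perturbation (Lemma 7 of the
companion paper): if `Q` has at most `2m` nonzero eigenvalues and `1 ≤ m ≤ n/6 - 1`,
then for every `p ≥ 1`,
`‖S+Q‖^{2p} − 7m‖S‖^{2p} ≤ tr((S+Q)^{2p}) − tr(S^{2p}) ≤ 4m‖S+Q‖^{2p}`,
where the spectral norm of a symmetric matrix is the largest absolute eigenvalue. -/
theorem stmt4 {n : ℕ} (m p : ℕ) (S Q : Matrix (Fin n) (Fin n) ℝ)
    (hS : S.IsHermitian) (hQ : Q.IsHermitian)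
    (hm1 : 1 ≤ m) (hm2 : (m : ℝ) ≤ (n : ℝ) / 6 - 1)
    (hrank : (Finset.univ.filter (fun i => hQ.eigenvalues i ≠ 0)).card ≤ 2 * m)
    (hp : 1 ≤ p) :
    (⨆ i, |(hS.add hQ).eigenvalues i|) ^ (2 * p)
        - 7 * (m : ℝ) * (⨆ i, |hS.eigenvalues i|) ^ (2 * p)
      ≤ Matrix.trace ((S + Q) ^ (2 * p)) - Matrix.trace (S ^ (2 * p)) ∧
    Matrix.trace ((S + Q) ^ (2 * p)) - Matrix.trace (S ^ (2 * p))
      ≤ 4 * (m : ℝ) * (⨆ i, |(hS.add hQ).eigenvalues i|) ^ (2 * p) :=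
  stmt4_general m p S Q hS hQ hm1 hrank hp
end

section
/- Define G_1(θ) = θ·(2−2x_0)/(2−3x_0), where x_0 = x_0(θ) ∈ (0,2/3) is the unique solution of (2−3x_0)^3/(x_0(1−x_0)^2) = θ^2, and define f(θ) = 2 for 0 < θ ≤ 1 and f(θ) = θ + 1/θ for θ ≥ 1. Then G_1(θ) < f(θ) for θ < 1, and G_1(θ) > f(θ) for θ > 1. Moreover G_1(θ) ≤ 2 if and only if θ ≤ 1. -/
/-!
Clearing denominators, the defining equation reads `θ² x (1-x)² = (2-3x)³`. It gives
`G₁² x = 4 (2-3x)`, so `G₁ ≤ 2 ↔ x ≥ 1/2`, and it factors as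
`(θ² - 1) x (1-x)² = (1-2x)(14x² - 21x + 8)` with a quadratic factor of negative discriminant,
so `θ ≤ 1 ↔ x ≥ 1/2`. For `θ > 1`, `G₁ > θ + 1/θ` amounts to `θ² x > 2 - 3x`, which
follows from `θ² x (1-x)² = (2-3x)³ > (2-3x)(1-x)²` since `2 - 3x > 1 - x` when `x < 1/2`.
-/

noncomputable def f (x : ℝ) : ℝ := if x < 1 then 2 else x + 1 / x

open Set

noncomputable def G₁ (θ x : ℝ) : ℝ := θ * (2 - 2 * x) / (2 - 3 * x)

lemma f_of_lt_one {θ : ℝ} (h : θ < 1) : f θ = 2 := if_pos h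

lemma f_of_one_le {θ : ℝ} (h : 1 ≤ θ) : f θ = θ + 1 / θ := if_neg (not_lt.mpr h)

lemma quadratic_factor_pos (x : ℝ) : 0 < 14 * x ^ 2 - 21 * x + 8 := by
  nlinarith [sq_nonneg (28 * x - 21)]

section DefiningEquation

variable {θ x : ℝ}

lemma sq_mul_eq_of_div_eq (hx : x ∈ Ioo (0 : ℝ) 1)
    (h : (2 - 3 * x) ^ 3 / (x * (1 - x) ^ 2) = θ ^ 2) :
    θ ^ 2 * (x * (1 - x) ^ 2) = (2 - 3 * x) ^ 3 :=
  (eq_div_iff (mul_pos hx.1 (pow_pos (sub_pos.mpr hx.2) 2)).ne').mp h.symm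

lemma G₁_sq_mul (h : θ ^ 2 * (x * (1 - x) ^ 2) = (2 - 3 * x) ^ 3) (hx : 2 - 3 * x ≠ 0) :
    G₁ θ x ^ 2 * x = 4 * (2 - 3 * x) := by
  rw [G₁, div_pow, div_mul_eq_mul_div, div_eq_iff (pow_ne_zero 2 hx)]
  linear_combination 4 * h

lemma sq_sub_one_mul_eq (h : θ ^ 2 * (x * (1 - x) ^ 2) = (2 - 3 * x) ^ 3) :
    (θ ^ 2 - 1) * (x * (1 - x) ^ 2) = (1 - 2 * x) * (14 * x ^ 2 - 21 * x + 8) := by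
  linear_combination h

lemma one_lt_iff_lt_half (h : θ ^ 2 * (x * (1 - x) ^ 2) = (2 - 3 * x) ^ 3) (hθ : 0 < θ)
    (hx : x ∈ Ioo (0 : ℝ) 1) : 1 < θ ↔ x < 1 / 2 := by
  have hD : 0 < x * (1 - x) ^ 2 := mul_pos hx.1 (pow_pos (sub_pos.mpr hx.2) 2)
  calc 1 < θ ↔ 1 < θ ^ 2 := (one_lt_pow_iff_of_nonneg hθ.le two_ne_zero).symm
    _ ↔ 0 < (θ ^ 2 - 1) * (x * (1 - x) ^ 2) := by rw [mul_pos_iff_of_pos_right hD, sub_pos]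
    _ ↔ 0 < (1 - 2 * x) * (14 * x ^ 2 - 21 * x + 8) := by rw [sq_sub_one_mul_eq h]
    _ ↔ x < 1 / 2 := by
      rw [mul_pos_iff_of_pos_right (quadratic_factor_pos x)]
      constructor <;> intro <;> linarith

lemma lt_one_iff_half_lt (h : θ ^ 2 * (x * (1 - x) ^ 2) = (2 - 3 * x) ^ 3) (hθ : 0 < θ)
    (hx : x ∈ Ioo (0 : ℝ) 1) : θ < 1 ↔ 1 / 2 < x := by
  have hD : 0 < x * (1 - x) ^ 2 := mul_pos hx.1 (pow_pos (sub_pos.mpr hx.2) 2)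
  calc θ < 1 ↔ θ ^ 2 < 1 := (pow_lt_one_iff_of_nonneg hθ.le two_ne_zero).symm
    _ ↔ 0 < (1 - θ ^ 2) * (x * (1 - x) ^ 2) := by rw [mul_pos_iff_of_pos_right hD, sub_pos]
    _ ↔ 0 < (2 * x - 1) * (14 * x ^ 2 - 21 * x + 8) := by
      rw [← neg_sub, neg_mul, sq_sub_one_mul_eq h, ← neg_mul, neg_sub]
    _ ↔ 1 / 2 < x := by
      rw [mul_pos_iff_of_pos_right (quadratic_factor_pos x)]
      constructor <;> intro <;> linarith

lemma two_sub_three_mul_lt_sq_mul (h : θ ^ 2 * (x * (1 - x) ^ 2) = (2 - 3 * x) ^ 3)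
    (hx : x < 1 / 2) : 2 - 3 * x < θ ^ 2 * x := by
  have h1 : 0 < 1 - x := by linarith
  have h2 : 1 - x < 2 - 3 * x := by linarith
  have : (2 - 3 * x) * (1 - x) ^ 2 < θ ^ 2 * x * (1 - x) ^ 2 := by
    calc (2 - 3 * x) * (1 - x) ^ 2 < (2 - 3 * x) * (2 - 3 * x) ^ 2 :=
          mul_lt_mul_of_pos_left (pow_lt_pow_left₀ h2 h1.le two_ne_zero) (h1.trans h2)
      _ = θ ^ 2 * x * (1 - x) ^ 2 := by linear_combination -h
  exact lt_of_mul_lt_mul_right this (sq_nonneg _)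

lemma add_one_div_lt_G₁ (h : θ ^ 2 * (x * (1 - x) ^ 2) = (2 - 3 * x) ^ 3) (hθ : 0 < θ)
    (hx : x < 1 / 2) : θ + 1 / θ < G₁ θ x := by
  have hgap : θ * (2 - 2 * x) - (θ + 1 / θ) * (2 - 3 * x) = (θ ^ 2 * x - (2 - 3 * x)) / θ := by
    field_simp
    ring
  rw [G₁, lt_div_iff₀ (by linarith), ← sub_pos, hgap]
  exact div_pos (sub_pos.mpr (two_sub_three_mul_lt_sq_mul h hx)) hθ

end DefiningEquation

section SquareRelation

variable {a x : ℝ}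

lemma le_two_iff_of_sq_mul_eq (ha : 0 < a) (h : a ^ 2 * x = 4 * (2 - 3 * x)) :
    a ≤ 2 ↔ 1 / 2 ≤ x := by
  constructor <;> intro <;> nlinarith

lemma lt_two_iff_of_sq_mul_eq (ha : 0 < a) (h : a ^ 2 * x = 4 * (2 - 3 * x)) :
    a < 2 ↔ 1 / 2 < x := by
  constructor <;> intro <;> nlinarith

end SquareRelation

/-- Comparison of `G₁(θ) = θ(2-2x₀)/(2-3x₀)` with `f(θ)`, where `x₀ ∈ (0,2/3)`
solves `(2-3x₀)³/(x₀(1-x₀)²) = θ²`: `G₁ < f` for `θ < 1`, `G₁ > f` for `θ > 1`,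
and `G₁(θ) ≤ 2 ↔ θ ≤ 1`. -/
theorem stmt10 (θ : ℝ) (hθ : 0 < θ) (x₀ : ℝ) (hx₀ : x₀ ∈ Set.Ioo (0 : ℝ) (2 / 3))
    (heq : (2 - 3 * x₀) ^ 3 / (x₀ * (1 - x₀) ^ 2) = θ ^ 2) :
    (θ < 1 → θ * (2 - 2 * x₀) / (2 - 3 * x₀) < f θ) ∧
    (1 < θ → f θ < θ * (2 - 2 * x₀) / (2 - 3 * x₀)) ∧
    (θ * (2 - 2 * x₀) / (2 - 3 * x₀) ≤ 2 ↔ θ ≤ 1) := by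
  have hx : x₀ ∈ Ioo (0 : ℝ) 1 := Ioo_subset_Ioo_right (by norm_num) hx₀
  have h23 : 0 < 2 - 3 * x₀ := by linarith [hx₀.2]
  have h := sq_mul_eq_of_div_eq hx heq
  have hG : 0 < G₁ θ x₀ := div_pos (mul_pos hθ (by linarith [hx.2])) h23
  have hsq := G₁_sq_mul h h23.ne'
  refine ⟨fun hlt => ?_, fun hgt => ?_, ?_⟩
  · rw [f_of_lt_one hlt]
    exact (lt_two_iff_of_sq_mul_eq hG hsq).mpr ((lt_one_iff_half_lt h hθ hx).mp hlt)
  · rw [f_of_one_le hgt.le]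
    exact add_one_div_lt_G₁ h hθ ((one_lt_iff_lt_half h hθ hx).mp hgt)
  · rw [← not_lt (b := θ), one_lt_iff_lt_half h hθ hx, not_lt]
    exact le_two_iff_of_sq_mul_eq hG hsq
end

section
/- Define G_2(θ) = θ·(2−2x_1)/(2−7x_1/3), where x_1 = x_1(θ) ∈ (0, 6/7) is the unique solution of (6−7x_1)^{7/3}/(x_1^{1/3}(1−x_1)^2) = 36θ^2/5^{2/3}. Then G_2(θ) ≤ 2 if and only if θ ≤ 128/89. -/
/-!
Cubing the defining equation of `x₁` gives `g(x₁)⁶ · h(x₁) = (6θ)⁶/25` with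
`g x = (6 - 7x)/(1 - x)` and `h x = (6 - 7x)/x`, both positive and strictly decreasing on
`(0, 6/7)`. The inequality `G₂(θ) ≤ 2` says `3θ ≤ g(x₁)`, which by the cubed equation is
`h(x₁) ≤ 64/25`, i.e. `x₁ ≥ 150/239`. On the other hand `θ` is a strictly decreasing function
of `x₁`, and `x₁ = 150/239` corresponds to `θ = 128/89`.
-/

open Set

/-- The cube of the left-hand side of the defining equation of `x₁`. -/
noncomputable def ratioCube (x : ℝ) : ℝ := ((6 - 7 * x) / (1 - x)) ^ 6 * ((6 - 7 * x) / x)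

lemma strictAntiOn_ratioCube : StrictAntiOn ratioCube (Ioo 0 (6 / 7)) := by
  rintro x ⟨hx0, hx1⟩ y ⟨hy0, hy1⟩ hxy
  have hg : (6 - 7 * y) / (1 - y) < (6 - 7 * x) / (1 - x) := by
    rw [div_lt_div_iff₀ (by linarith) (by linarith)]
    nlinarith
  have hh : (6 - 7 * y) / y < (6 - 7 * x) / x := by
    rw [div_lt_div_iff₀ hy0 hx0]
    nlinarith
  have hgy : 0 < (6 - 7 * y) / (1 - y) := div_pos (by linarith) (by linarith)
  have hhy : 0 < (6 - 7 * y) / y := div_pos (by linarith) hy0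
  exact mul_lt_mul'' (pow_lt_pow_left₀ hg hgy.le (by norm_num)) hh (by positivity) hhy.le

lemma rpow_div_three_pow_three {a : ℝ} (ha : 0 ≤ a) (n : ℕ) :
    (a ^ ((n : ℝ) / 3)) ^ 3 = a ^ n := by
  rw [← Real.rpow_natCast (a ^ _) 3, ← Real.rpow_mul ha]
  norm_num

lemma ratioCube_eq_of_eq {θ x : ℝ} (hx : x ∈ Ioo 0 (6 / 7))
    (heq : (6 - 7 * x) ^ ((7 : ℝ) / 3) / (x ^ ((1 : ℝ) / 3) * (1 - x) ^ 2)
      = 36 * θ ^ 2 / (5 : ℝ) ^ ((2 : ℝ) / 3)) :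
    ratioCube x = (6 * θ) ^ 6 / 25 := by
  obtain ⟨hx0, hx1⟩ := hx
  have h7 := rpow_div_three_pow_three (a := 6 - 7 * x) (by linarith) 7
  have h1 := rpow_div_three_pow_three hx0.le 1
  have h2 := rpow_div_three_pow_three (a := 5) (by norm_num) 2
  push_cast at h7 h1 h2
  have h := congrArg (· ^ 3) heq
  simp only [div_pow, mul_pow, h7, h1, h2, pow_one] at h
  rw [ratioCube]
  have : 1 - x ≠ 0 := by linarith
  field_simp at h ⊢
  linear_combination h

lemma le_two_iff_of_ratioCube_eq {θ x : ℝ} (hθ : 0 < θ) (hx : x ∈ Ioo 0 (6 / 7))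
    (hcube : ratioCube x = (6 * θ) ^ 6 / 25) :
    θ * (2 - 2 * x) / (2 - 7 * x / 3) ≤ 2 ↔ 150 / 239 ≤ x := by
  obtain ⟨hx0, hx1⟩ := hx
  have hg : 0 ≤ (6 - 7 * x) / (1 - x) := div_nonneg (by linarith) (by linarith)
  have hh : 0 < (6 - 7 * x) / x := div_pos (by linarith) hx0
  have hcube' : ((6 - 7 * x) / (1 - x)) ^ 6 * ((6 - 7 * x) / x) = (3 * θ) ^ 6 * (64 / 25) := by
    rw [← ratioCube, hcube]
    ring
  calc θ * (2 - 2 * x) / (2 - 7 * x / 3) ≤ 2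
      ↔ 3 * θ ≤ (6 - 7 * x) / (1 - x) := by
        rw [div_le_iff₀ (by linarith), le_div_iff₀ (by linarith)]
        constructor <;> intro h <;> linarith
    _ ↔ (3 * θ) ^ 6 ≤ ((6 - 7 * x) / (1 - x)) ^ 6 :=
        (pow_le_pow_iff_left₀ (by positivity) hg (by norm_num)).symm
    _ ↔ (3 * θ) ^ 6 * ((6 - 7 * x) / x) ≤ (3 * θ) ^ 6 * (64 / 25) := by
        rw [← hcube', mul_le_mul_iff_left₀ hh]
    _ ↔ (6 - 7 * x) / x ≤ 64 / 25 := mul_le_mul_iff_right₀ (by positivity)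
    _ ↔ 150 / 239 ≤ x := by
        rw [div_le_iff₀ hx0]
        constructor <;> intro h <;> linarith

lemma le_iff_of_ratioCube_eq {θ x : ℝ} (hθ : 0 < θ) (hx : x ∈ Ioo 0 (6 / 7))
    (hcube : ratioCube x = (6 * θ) ^ 6 / 25) : θ ≤ 128 / 89 ↔ 150 / 239 ≤ x := by
  have hc : (150 / 239 : ℝ) ∈ Ioo 0 (6 / 7) := by norm_num
  calc θ ≤ 128 / 89
      ↔ (6 * θ) ^ 6 / 25 ≤ (6 * (128 / 89)) ^ 6 / 25 := by
        rw [div_le_div_iff_of_pos_right (by norm_num),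
          pow_le_pow_iff_left₀ (by positivity) (by positivity) (by norm_num)]
        constructor <;> intro h <;> linarith
    _ ↔ ratioCube x ≤ ratioCube (150 / 239) := by
        rw [hcube, show ratioCube (150 / 239) = (6 * (128 / 89)) ^ 6 / 25 by norm_num [ratioCube]]
    _ ↔ 150 / 239 ≤ x := strictAntiOn_ratioCube.le_iff_ge hx hc

/-- For `G₂(θ) = θ(2-2x₁)/(2-7x₁/3)` with `x₁ ∈ (0,6/7)` the unique solution of
`(6-7x₁)^{7/3}/(x₁^{1/3}(1-x₁)²) = 36θ²/5^{2/3}`, one has `G₂(θ) ≤ 2 ↔ θ ≤ 128/89`. -/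
theorem stmt11 (θ : ℝ) (hθ : 0 < θ) (x₁ : ℝ) (hx₁ : x₁ ∈ Set.Ioo (0 : ℝ) (6 / 7))
    (heq : (6 - 7 * x₁) ^ ((7 : ℝ) / 3) / (x₁ ^ ((1 : ℝ) / 3) * (1 - x₁) ^ 2)
      = 36 * θ ^ 2 / (5 : ℝ) ^ ((2 : ℝ) / 3)) :
    θ * (2 - 2 * x₁) / (2 - 7 * x₁ / 3) ≤ 2 ↔ θ ≤ 128 / 89 := by
  have hcube := ratioCube_eq_of_eq hx₁ heq
  rw [le_two_iff_of_ratioCube_eq hθ hx₁ hcube, le_iff_of_ratioCube_eq hθ hx₁ hcube]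
end

section
/- Let D = {(x,y,z) ∈ [0,1]^3 : y ≤ z ≤ x, y ≤ 2−2x} and define h: D → ℝ by h(x,y,z) = θ^{2−2x} · z^z/(y^y·(z−y)^{z−y}) · (2−2x)^{2−2x}/(y^y·(2−2x−y)^{2−2x−y}) · (2x−z)^{2x−z}/(x^x·(x−z)^{x−z}), with the convention 0^0 = 1. Then sup_{D} h = f(θ)^2, where f(θ) = 2 for 0 < θ ≤ 1 and f(θ) = θ + 1/θ for θ ≥ 1. -/
/-- The domain `D = {(x,y,z) ∈ [0,1]³ : y ≤ z ≤ x, y ≤ 2-2x}`. -/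
def D : Set (ℝ × ℝ × ℝ) :=
  {p | p.1 ∈ Set.Icc (0 : ℝ) 1 ∧ p.2.1 ∈ Set.Icc (0 : ℝ) 1 ∧ p.2.2 ∈ Set.Icc (0 : ℝ) 1 ∧
    p.2.1 ≤ p.2.2 ∧ p.2.2 ≤ p.1 ∧ p.2.1 ≤ 2 - 2 * p.1}

/-- `h(x,y,z)` from Lemma 9, with real powers (so `0^0 = 1`). -/
noncomputable def h (θ x y z : ℝ) : ℝ :=
  θ ^ (2 - 2 * x) * (z ^ z / (y ^ y * (z - y) ^ (z - y)))
    * ((2 - 2 * x) ^ (2 - 2 * x) / (y ^ y * (2 - 2 * x - y) ^ (2 - 2 * x - y)))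
    * ((2 * x - z) ^ (2 * x - z) / (x ^ x * (x - z) ^ (x - z)))

/-!
Each of the three quotients in `h` has the shape `(b + c) ^ (b + c) / (b ^ b * c ^ c)`, which by
Gibbs' inequality is at most `(p ^ b * q ^ c)⁻¹` for every `p + q = 1`, with equality when
`b : c = p : q`. Multiplying the three bounds gives `h θ x y z ≤ θ ^ (2 - 2x) / (p ^ (2 - x) q ^ x)`.
For `θ ≤ 1` take `p = q = 1/2`: the bound is `4 θ ^ (2 - 2x) ≤ 4 = h θ 1 0 0`. For `θ ≥ 1` take
`p = θ² q`: the bound is the constant `(θ + 1/θ)²`, and it is attained at the point of `D` where all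
three quotients are split in the ratio `p : q`.
-/

open Real

lemma rpow_self_eq_exp {b : ℝ} (hb : 0 ≤ b) : b ^ b = exp (b * log b) := by
  rcases hb.eq_or_lt with rfl | hb
  · simp
  · rw [rpow_def_of_pos hb, mul_comm]

lemma rpow_self_pos {b : ℝ} (hb : 0 ≤ b) : 0 < b ^ b := by
  rw [rpow_self_eq_exp hb]
  exact exp_pos _

lemma mul_log_sub_log_le {b u : ℝ} (hb : 0 ≤ b) (hu : 0 < u) : b * (log u - log b) ≤ u - b := by
  rcases hb.eq_or_lt with rfl | hb
  · simpa using hu.le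
  calc b * (log u - log b) = b * log (u / b) := by rw [log_div hu.ne' hb.ne']
    _ ≤ b * (u / b - 1) := by gcongr; exact log_le_sub_one_of_pos (div_pos hu hb)
    _ = u - b := by field_simp

noncomputable def binomFactor (b c : ℝ) : ℝ := (b + c) ^ (b + c) / (b ^ b * c ^ c)

lemma binomFactor_nonneg {b c : ℝ} (hb : 0 ≤ b) (hc : 0 ≤ c) : 0 ≤ binomFactor b c :=
  div_nonneg (rpow_nonneg (add_nonneg hb hc) _) (mul_pos (rpow_self_pos hb) (rpow_self_pos hc)).le

lemma binomFactor_le {p q b c : ℝ} (hp : 0 < p) (hq : 0 < q) (hpq : p + q = 1)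
    (hb : 0 ≤ b) (hc : 0 ≤ c) : binomFactor b c ≤ (p ^ b * q ^ c)⁻¹ := by
  rcases (add_nonneg hb hc).eq_or_lt with hs | hs
  · obtain ⟨rfl, rfl⟩ : b = 0 ∧ c = 0 := ⟨by linarith, by linarith⟩
    simp [binomFactor]
  rw [binomFactor, div_le_iff₀ (mul_pos (rpow_self_pos hb) (rpow_self_pos hc)), inv_mul_eq_div,
    le_div_iff₀ (by positivity), rpow_self_eq_exp hs.le, rpow_self_eq_exp hb,
    rpow_self_eq_exp hc, rpow_def_of_pos hp, rpow_def_of_pos hq, ← exp_add, ← exp_add,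
    ← exp_add, exp_le_exp]
  have hbp := mul_log_sub_log_le hb (mul_pos hp hs)
  have hcq := mul_log_sub_log_le hc (mul_pos hq hs)
  rw [log_mul hp.ne' hs.ne'] at hbp
  rw [log_mul hq.ne' hs.ne'] at hcq
  linear_combination hbp + hcq + (b + c) * hpq

lemma binomFactor_of_proportional {p q b c : ℝ} (hp : 0 < p) (hq : 0 < q) (hs : 0 ≤ b + c)
    (hb : b = p * (b + c)) (hc : c = q * (b + c)) : binomFactor b c = (p ^ b * q ^ c)⁻¹ := by
  rcases hs.eq_or_lt with hs | hs
  · obtain ⟨rfl, rfl⟩ : b = 0 ∧ c = 0 := ⟨by rw [hb, ← hs, mul_zero], by rw [hc, ← hs, mul_zero]⟩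
    simp [binomFactor]
  have hfactor : b ^ b * c ^ c = p ^ b * q ^ c * (b + c) ^ (b + c) :=
    calc b ^ b * c ^ c = (p * (b + c)) ^ b * (q * (b + c)) ^ c := by rw [← hb, ← hc]
      _ = p ^ b * q ^ c * (b + c) ^ (b + c) := by
        rw [mul_rpow hp.le hs.le, mul_rpow hq.le hs.le, rpow_add hs]
        ring
  rw [binomFactor, hfactor, div_mul_cancel_right₀ (rpow_self_pos hs.le).ne']

lemma h_eq_binomFactor (θ x y z : ℝ) :
    h θ x y z = θ ^ (2 - 2 * x) * binomFactor y (z - y) * binomFactor y (2 - 2 * x - y)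
      * binomFactor x (x - z) := by
  rw [h, binomFactor, binomFactor, binomFactor, add_sub_cancel, add_sub_cancel,
    show x + (x - z) = 2 * x - z by ring]

lemma inv_bounds_mul_eq {p q : ℝ} (hp : 0 < p) (hq : 0 < q) (x y z : ℝ) :
    (p ^ y * q ^ (z - y))⁻¹ * (q ^ y * p ^ (2 - 2 * x - y))⁻¹ * (p ^ x * q ^ (x - z))⁻¹
      = (p ^ (2 - x) * q ^ x)⁻¹ := by
  have hpow_p : p ^ (2 - x) = p ^ y * p ^ (2 - 2 * x - y) * p ^ x := by
    rw [← rpow_add hp, ← rpow_add hp]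
    ring_nf
  have hpow_q : q ^ x = q ^ (z - y) * q ^ y * q ^ (x - z) := by
    rw [← rpow_add hq, ← rpow_add hq]
    ring_nf
  rw [hpow_p, hpow_q]
  ring

lemma h_le {θ p q x y z : ℝ} (hθ : 0 ≤ θ) (hp : 0 < p) (hq : 0 < q) (hpq : p + q = 1)
    (hmem : (x, y, z) ∈ D) : h θ x y z ≤ θ ^ (2 - 2 * x) / (p ^ (2 - x) * q ^ x) := by
  obtain ⟨⟨hx, -⟩, ⟨hy, -⟩, -, hyz, hzx, hyx⟩ := hmem
  rw [h_eq_binomFactor, div_eq_mul_inv, ← inv_bounds_mul_eq hp hq x y z, ← mul_assoc, ← mul_assoc]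
  have := rpow_nonneg hθ (2 - 2 * x)
  gcongr
  · exact binomFactor_nonneg hx (by linarith)
  · exact binomFactor_nonneg hy (by linarith)
  · exact binomFactor_le hp hq hpq hy (by linarith)
  · exact binomFactor_le hq hp (by linarith) hy (by linarith)
  · exact binomFactor_le hp hq hpq hx (by linarith)

lemma h_eq_of_proportional {θ p q x y z : ℝ} (hp : 0 < p) (hq : 0 < q) (hpq : p + q = 1)
    (hmem : (x, y, z) ∈ D)
    (hyz : y = p * z) (hyx : y = q * (2 - 2 * x)) (hxz : x = p * (2 * x - z)) :
    h θ x y z = θ ^ (2 - 2 * x) / (p ^ (2 - x) * q ^ x) := by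
  obtain ⟨⟨hx, hx1⟩, ⟨hy, -⟩, -, hy_le_z, hzx, -⟩ := hmem
  rw [h_eq_binomFactor, div_eq_mul_inv, ← inv_bounds_mul_eq hp hq x y z,
    binomFactor_of_proportional (b := y) (c := z - y) hp hq (by linarith)
      (by linear_combination hyz) (by linear_combination -hyz - z * hpq),
    binomFactor_of_proportional (b := y) (c := 2 - 2 * x - y) hq hp (by linarith)
      (by linear_combination hyx) (by linear_combination -hyx - (2 - 2 * x) * hpq),
    binomFactor_of_proportional (b := x) (c := x - z) hp hq (by linarith)
      (by linear_combination hxz) (by linear_combination -hxz - (2 * x - z) * hpq)]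
  ring

lemma bound_eq_of_eq_sq_mul {θ p q : ℝ} (hθ : 0 < θ) (hq : 0 < q) (hpq : p + q = 1)
    (hp : p = θ ^ 2 * q) (x : ℝ) :
    θ ^ (2 - 2 * x) / (p ^ (2 - x) * q ^ x) = (θ + 1 / θ) ^ 2 := by
  have hpow : p ^ (2 - x) * q ^ x = θ ^ (2 - 2 * x) * (θ * q) ^ 2 := by
    rw [hp, mul_rpow (by positivity) hq.le, ← rpow_natCast θ 2, ← rpow_mul hθ.le, mul_assoc,
      ← rpow_add hq, sub_add_cancel, rpow_two, show ((2 : ℕ) : ℝ) * (2 - x) = (2 - 2 * x) + 2 by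
        push_cast; ring, rpow_add hθ, rpow_two]
    ring
  have hq1 : q * (1 + θ ^ 2) = 1 := by linear_combination hpq - hp
  rw [hpow, div_mul_cancel_left₀ (rpow_pos_of_pos hθ _).ne']
  field_simp
  linear_combination (-(q * (1 + θ ^ 2)) - 1) * hq1

lemma mem_D_of_le {p q : ℝ} (hq : 0 < q) (hqp : q ≤ p) (hpq : p + q = 1) :
    (2 * q, 2 * q * (p - q), 2 * q * (p - q) / p) ∈ D := by
  have hp : 0 < p := by linarith
  have hy : 0 ≤ 2 * q * (p - q) := by nlinarith
  refine ⟨⟨by linarith, by linarith⟩, ⟨hy, by nlinarith⟩, ⟨by positivity, ?_⟩, ?_, ?_, by nlinarith⟩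
  · rw [div_le_one hp]; nlinarith
  · rw [le_div_iff₀ hp]; nlinarith
  · rw [div_le_iff₀ hp]; nlinarith

lemma isGreatest_h_of_le_one {θ : ℝ} (hθ0 : 0 ≤ θ) (hθ1 : θ ≤ 1) :
    IsGreatest ((fun p : ℝ × ℝ × ℝ => h θ p.1 p.2.1 p.2.2) '' D) 4 := by
  refine ⟨⟨(1, 0, 0), by norm_num [D], by norm_num [h, rpow_two]⟩, ?_⟩
  rintro _ ⟨⟨x, y, z⟩, hmem, rfl⟩
  have hhalf : (0 : ℝ) < 1 / 2 := by norm_num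
  calc h θ x y z ≤ θ ^ (2 - 2 * x) / ((1 / 2) ^ (2 - x) * (1 / 2) ^ x) :=
        h_le hθ0 hhalf hhalf (by norm_num) hmem
    _ = 4 * θ ^ (2 - 2 * x) := by
        rw [← rpow_add hhalf, sub_add_cancel, rpow_two]
        ring
    _ ≤ 4 := by
        have := rpow_le_one hθ0 hθ1 (by linarith [hmem.1.2] : (0 : ℝ) ≤ 2 - 2 * x)
        linarith

lemma isGreatest_h_of_one_le {θ : ℝ} (hθ : 1 ≤ θ) :
    IsGreatest ((fun p : ℝ × ℝ × ℝ => h θ p.1 p.2.1 p.2.2) '' D) ((θ + 1 / θ) ^ 2) := by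
  have hθ0 : 0 < θ := by linarith
  set q := 1 / (1 + θ ^ 2) with hq_def
  set p := θ ^ 2 * q with hp_def
  have hq : 0 < q := by positivity
  have hp : 0 < p := by positivity
  have hpq : p + q = 1 := by rw [hp_def, hq_def]; field_simp; ring
  have hqp : q ≤ p := by rw [hp_def]; nlinarith
  have hmem := mem_D_of_le hq hqp hpq
  refine ⟨⟨_, hmem, ?_⟩, ?_⟩
  · dsimp only
    rw [h_eq_of_proportional hp hq hpq hmem (mul_div_cancel₀ _ hp.ne').symm
      (by linear_combination 2 * q * hpq)
      (by rw [mul_sub, mul_div_cancel₀ _ hp.ne']; linear_combination -2 * q * hpq),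
      bound_eq_of_eq_sq_mul hθ0 hq hpq rfl]
  · rintro _ ⟨⟨x, y, z⟩, hmem, rfl⟩
    exact (h_le hθ0.le hp hq hpq hmem).trans_eq (bound_eq_of_eq_sq_mul hθ0 hq hpq rfl x)

/-- `sup_D h = f(θ)²`. -/
theorem stmt14 (θ : ℝ) (hθ : 0 < θ) :
    sSup ((fun p : ℝ × ℝ × ℝ => h θ p.1 p.2.1 p.2.2) '' D) = f θ ^ 2 := by
  rcases lt_or_ge θ 1 with hθ1 | hθ1
  · rw [f, if_pos hθ1]
    rw [show (2 : ℝ) ^ 2 = 4 by norm_num]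
    exact (isGreatest_h_of_le_one hθ.le hθ1.le).csSup_eq
  · rw [f, if_neg (not_lt.mpr hθ1)]
    exact (isGreatest_h_of_one_le hθ1).csSup_eq
end
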